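/- arXiv:2501.07692 — 2 statements merged into one kernel-verified Lean document; each statement's English description precedes it below -/
import Mathlib

section
/- For all integers d ≥ 2 and n ≥ 0, ℰ_{dn}^{(d)} = (-1)^n · #A_{dn}^{(d)}, where #A_{dn}^{(d)} is the number of d-alternating permutations of {1,…,dn}. -/
/-- The generalized Euler number `ℰ_n^{(d)}`: `n!` times the coefficient of `x^n` in the
multiplicative inverse of the formal power series `∑_{k≥0} x^{dk}/(dk)!` over `ℚ`. -/
noncomputable def genEulerQ (d n : ℕ) : ℚ :=
  (n.factorial : ℚ) *
    PowerSeries.coeff (R := ℚ) n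
      (PowerSeries.mk fun m => if d ∣ m then (1 : ℚ) / m.factorial else 0)⁻¹

/-- A permutation `σ` of `{1,…,m}` (in one-line notation `σ_1…σ_m`, where `σ_j = σ ⟨j-1⟩`)
is `d`-alternating if its descent set `Des σ = {i : 1 ≤ i < m, σ_i > σ_{i+1}}` equals
`{di : d ≤ di < m}`, i.e. the descents are exactly the positions divisible by `d`. -/
def IsDAlternating (d : ℕ) {m : ℕ} (σ : Equiv.Perm (Fin m)) : Prop :=
  ∀ i : ℕ, ∀ h : i + 1 < m, (σ ⟨i + 1, h⟩ < σ ⟨i, by omega⟩ ↔ d ∣ (i + 1))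

/-!
Write `a m` for the number of `d`-alternating permutations of `Fin m`. By expanding `x ↦ x ^ d`
it suffices that `∑ (-1)^k a (dk) x^k / (dk)!` is the reciprocal of `∑ x^k / (dk)!`, that is,
`∑_{r ≤ n} (-1)^r C(dn, dr) a (dr) = 0` for `n ≥ 1`.

Recording which values occupy the first `dr` positions and in which relative order,
`C(dn, dr) a (dr)` counts the permutations of `Fin (dn)` whose descents are the multiples of `d`
below `dr` and possibly `dr` itself. Splitting on whether `dr` is a descent, this is
`β r + β (r - 1)` (just `β 0`, resp. `β (n - 1)`, at the two ends), where `β r` counts the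
permutations with descent set `{d, 2d, …, dr}`; so the alternating sum telescopes to zero.
-/

open Finset Equiv

variable {m : ℕ}

/-- `IsDAlternating d` is `HasDescentSet (d ∣ ·)` by definition. -/
def HasDescentSet (D : ℕ → Prop) (σ : Perm (Fin m)) : Prop :=
  ∀ i : ℕ, ∀ h : i + 1 < m, (σ ⟨i + 1, h⟩ < σ ⟨i, by omega⟩ ↔ D (i + 1))

def HasDescentSetExcept (D : ℕ → Prop) (j : ℕ) (σ : Perm (Fin m)) : Prop :=
  ∀ i : ℕ, ∀ h : i + 1 < m, i + 1 ≠ j → (σ ⟨i + 1, h⟩ < σ ⟨i, by omega⟩ ↔ D (i + 1))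

noncomputable def numDAlternating (d m : ℕ) : ℕ :=
  Nat.card {σ : Perm (Fin m) // IsDAlternating d σ}

lemma hasDescentSet_congr {D D' : ℕ → Prop} {σ : Perm (Fin m)}
    (h : ∀ k, 0 < k → k < m → (D k ↔ D' k)) : HasDescentSet D σ ↔ HasDescentSet D' σ :=
  forall₂_congr fun i hi => iff_congr Iff.rfl (h (i + 1) i.succ_pos hi)

lemma hasDescentSetExcept_iff_hasDescentSet {D : ℕ → Prop} {j : ℕ} {σ : Perm (Fin m)}
    (hj : j = 0 ∨ m ≤ j) : HasDescentSetExcept D j σ ↔ HasDescentSet D σ :=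
  forall₂_congr fun _ _ => ⟨fun h => h (by omega), fun h _ => h⟩

lemma hasDescentSetExcept_iff {D : ℕ → Prop} {j : ℕ} {σ : Perm (Fin m)} (hj : 0 < j)
    (hjm : j < m) : HasDescentSetExcept D j σ ↔
      HasDescentSet (fun k => D k ∨ k = j) σ ∨ HasDescentSet (fun k => D k ∧ k ≠ j) σ := by
  obtain ⟨j, rfl⟩ := Nat.exists_eq_add_one_of_ne_zero hj.ne'
  refine ⟨fun h => ?_, ?_⟩
  · by_cases hdes : σ ⟨j + 1, hjm⟩ < σ ⟨j, by omega⟩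
    · refine Or.inl fun i hi => ?_
      rcases eq_or_ne i j with rfl | hij
      · exact iff_of_true hdes (Or.inr rfl)
      · exact (h i hi (by omega)).trans (or_iff_left (by omega)).symm
    · refine Or.inr fun i hi => ?_
      rcases eq_or_ne i j with rfl | hij
      · exact iff_of_false hdes fun h => h.2 rfl
      · exact (h i hi (by omega)).trans (and_iff_left (by omega)).symm
  · rintro (h | h) i hi hij
    · exact (h i hi).trans (or_iff_left hij)
    · exact (h i hi).trans (and_iff_left hij)

lemma card_hasDescentSet_congr {D D' : ℕ → Prop} (h : ∀ k, 0 < k → k < m → (D k ↔ D' k)) :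
    Nat.card {σ : Perm (Fin m) // HasDescentSet D σ} =
      Nat.card {σ : Perm (Fin m) // HasDescentSet D' σ} :=
  Nat.card_congr (Equiv.subtypeEquivRight fun _ => hasDescentSet_congr h)

lemma card_hasDescentSetExcept {D : ℕ → Prop} {j : ℕ} (hj : 0 < j) (hjm : j < m) :
    Nat.card {σ : Perm (Fin m) // HasDescentSetExcept D j σ} =
      Nat.card {σ : Perm (Fin m) // HasDescentSet (fun k => D k ∨ k = j) σ} +
        Nat.card {σ : Perm (Fin m) // HasDescentSet (fun k => D k ∧ k ≠ j) σ} := by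
  classical
  have hdisj : Disjoint (HasDescentSet (fun k => D k ∨ k = j))
      (HasDescentSet (m := m) (fun k => D k ∧ k ≠ j)) := by
    refine Pi.disjoint_iff.2 fun σ => disjoint_iff_inf_le.2 fun ⟨h₁, h₂⟩ => ?_
    obtain ⟨i, rfl⟩ := Nat.exists_eq_add_one_of_ne_zero hj.ne'
    exact ((h₂ i hjm).1 ((h₁ i hjm).2 (Or.inr rfl))).2 rfl
  rw [Nat.card_congr ((Equiv.subtypeEquivRight fun _ => hasDescentSetExcept_iff hj hjm).trans
    (subtypeOrEquiv _ _ hdisj)), Nat.card_sum]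

section Shuffle

variable {j k : ℕ}

lemma card_compl_of_card_eq {s : Finset (Fin (j + k))} (hs : s.card = j) : sᶜ.card = k := by
  rw [card_compl, hs, Fintype.card_fin, Nat.add_sub_cancel_left]

variable (s : Finset (Fin (j + k))) (hs : s.card = j) (τ : Perm (Fin j))

def shuffle : Fin (j + k) → Fin (j + k) :=
  Fin.append (s.orderEmbOfFin hs ∘ τ) (sᶜ.orderEmbOfFin (card_compl_of_card_eq hs))

lemma shuffle_castAdd (y : Fin j) :
    shuffle s hs τ (Fin.castAdd k y) = s.orderEmbOfFin hs (τ y) :=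
  Fin.append_left _ _ y

lemma shuffle_natAdd (x : Fin k) :
    shuffle s hs τ (Fin.natAdd j x) = sᶜ.orderEmbOfFin (card_compl_of_card_eq hs) x :=
  Fin.append_right _ _ x

lemma shuffle_injective : Function.Injective (shuffle s hs τ) :=
  Fin.append_injective_iff.2
    ⟨(s.orderEmbOfFin hs).injective.comp τ.injective, (sᶜ.orderEmbOfFin _).injective,
      fun y x h => mem_compl.1 (orderEmbOfFin_mem sᶜ _ x) (by
        rw [← h]; exact orderEmbOfFin_mem s hs (τ y))⟩

noncomputable def shufflePerm : Perm (Fin (j + k)) :=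
  Equiv.ofBijective _ (Finite.injective_iff_bijective.1 (shuffle_injective s hs τ))

lemma image_shufflePerm_castAdd :
    univ.image (shufflePerm s hs τ ∘ Fin.castAdd k) = s := by
  have : shufflePerm s hs τ ∘ Fin.castAdd k = s.orderEmbOfFin hs ∘ τ :=
    funext (shuffle_castAdd s hs τ)
  rw [this, ← image_image, image_univ_equiv, image_orderEmbOfFin_univ]

lemma hasDescentSetExcept_shufflePerm {D : ℕ → Prop} (hτ : HasDescentSet D τ) :
    HasDescentSetExcept (fun i => D i ∧ i < j) j (shufflePerm s hs τ) := by
  intro i h hij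
  by_cases hi : i + 1 < j
  · have e1 : (⟨i + 1, h⟩ : Fin (j + k)) = Fin.castAdd k ⟨i + 1, hi⟩ := rfl
    have e2 : (⟨i, by omega⟩ : Fin (j + k)) = Fin.castAdd k ⟨i, by omega⟩ := rfl
    simp only [shufflePerm, ofBijective_apply, e1, e2, shuffle_castAdd, OrderEmbedding.lt_iff_lt,
      hτ i hi, hi, and_true]
  · have e1 : (⟨i + 1, h⟩ : Fin (j + k)) = Fin.natAdd j ⟨i + 1 - j, by omega⟩ := by
      ext; simp; omega
    have e2 : (⟨i, by omega⟩ : Fin (j + k)) = Fin.natAdd j ⟨i - j, by omega⟩ := by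
      ext; simp; omega
    simp only [shufflePerm, ofBijective_apply, e1, e2, shuffle_natAdd, OrderEmbedding.lt_iff_lt,
      hi, and_false, iff_false, not_lt, Fin.mk_le_mk]
    omega

lemma shufflePerm_inj {s s' : Finset (Fin (j + k))} {hs : s.card = j} {hs' : s'.card = j}
    {τ τ' : Perm (Fin j)} (h : shufflePerm s hs τ = shufflePerm s' hs' τ') : s = s' ∧ τ = τ' := by
  obtain rfl : s = s' := by
    rw [← image_shufflePerm_castAdd s hs τ, h, image_shufflePerm_castAdd]
  refine ⟨rfl, Equiv.ext fun y => (s.orderEmbOfFin hs).injective ?_⟩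
  rw [← shuffle_castAdd, ← shuffle_castAdd]
  exact congrFun (congrArg DFunLike.coe h) (Fin.castAdd k y)

lemma strictMono_natAdd_of_hasDescentSetExcept {D : ℕ → Prop} {σ : Perm (Fin (j + k))}
    (hσ : HasDescentSetExcept (fun i => D i ∧ i < j) j σ) :
    StrictMono fun x : Fin k => σ (Fin.natAdd j x) := by
  cases k with
  | zero => exact fun x => x.elim0
  | succ k =>
    refine Fin.strictMono_iff_lt_succ.2 fun x => lt_of_le_of_ne ?_ (σ.injective.ne ?_)
    · have := hσ (j + x) (by omega) (by omega)
      exact not_lt.1 fun h => absurd (this.1 h).2 (by omega)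
    · simp [Fin.ext_iff]

lemma exists_shufflePerm_eq {D : ℕ → Prop} {σ : Perm (Fin (j + k))}
    (hσ : HasDescentSetExcept (fun i => D i ∧ i < j) j σ) :
    ∃ (s : Finset (Fin (j + k))) (hs : s.card = j) (τ : Perm (Fin j)),
      HasDescentSet D τ ∧ shufflePerm s hs τ = σ := by
  set s := univ.map ((Fin.castAddEmb k).trans σ.toEmbedding)
  have hs : s.card = j := by simp [s]
  have mem (y : Fin j) : σ (Fin.castAdd k y) ∈ s := mem_map_of_mem _ (mem_univ y)
  let τ : Perm (Fin j) := Equiv.ofBijective (fun y => (s.orderIsoOfFin hs).symm ⟨_, mem y⟩)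
    (Finite.injective_iff_bijective.1 fun y y' h => by simpa using h)
  have head (y : Fin j) : s.orderEmbOfFin hs (τ y) = σ (Fin.castAdd k y) := by
    simp [τ, ← coe_orderIsoOfFin_apply]
  have tail (x : Fin k) :
      sᶜ.orderEmbOfFin (card_compl_of_card_eq hs) x = σ (Fin.natAdd j x) := by
    refine congrFun (orderEmbOfFin_unique _ (fun x' => ?_)
      (strictMono_natAdd_of_hasDescentSetExcept hσ)).symm x
    simp only [s, mem_compl, mem_map, mem_univ, true_and, not_exists]
    intro y h
    have : (y : ℕ) = j + x' := congrArg Fin.val (σ.injective h)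
    omega
  refine ⟨s, hs, τ, fun i h => ?_, Equiv.ext fun i => ?_⟩
  · rw [← (s.orderEmbOfFin hs).lt_iff_lt, head, head]
    exact (hσ i (by omega) (by omega)).trans (and_iff_left h)
  · refine Fin.addCases (fun y => ?_) (fun x => ?_) i
    · exact (shuffle_castAdd s hs τ y).trans (head y)
    · exact (shuffle_natAdd s hs τ x).trans (tail x)

end Shuffle

theorem card_hasDescentSetExcept_eq_choose_mul {D : ℕ → Prop} {j : ℕ} (hjm : j ≤ m) :
    Nat.card {σ : Perm (Fin m) // HasDescentSetExcept (fun i => D i ∧ i < j) j σ} =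
      m.choose j * Nat.card {τ : Perm (Fin j) // HasDescentSet D τ} := by
  obtain ⟨k, rfl⟩ := Nat.exists_eq_add_of_le hjm
  let Φ (p : {s : Finset (Fin (j + k)) // s.card = j} × {τ : Perm (Fin j) // HasDescentSet D τ}) :
      {σ : Perm (Fin (j + k)) // HasDescentSetExcept (fun i => D i ∧ i < j) j σ} :=
    ⟨shufflePerm p.1.1 p.1.2 p.2.1, hasDescentSetExcept_shufflePerm _ _ _ p.2.2⟩
  have hΦ : Function.Bijective Φ := by
    refine ⟨fun ⟨⟨s, hs⟩, ⟨τ, hτ⟩⟩ ⟨⟨s', hs'⟩, ⟨τ', hτ'⟩⟩ h => ?_, fun ⟨σ, hσ⟩ => ?_⟩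
    · obtain ⟨rfl, rfl⟩ := shufflePerm_inj (congrArg Subtype.val h)
      rfl
    · obtain ⟨s, hs, τ, hτ, rfl⟩ := exists_shufflePerm_eq hσ
      exact ⟨⟨⟨s, hs⟩, ⟨τ, hτ⟩⟩, rfl⟩
  rw [← Nat.card_eq_of_bijective Φ hΦ, Nat.card_prod, Nat.card_eq_fintype_card (α := {s // _}),
    Fintype.card_finset_len, Fintype.card_fin]

lemma lt_mul_add_one_iff_le_mul_of_dvd {d i r : ℕ} (hd : 0 < d) (hi : d ∣ i) :
    i < d * (r + 1) ↔ i ≤ d * r := by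
  obtain ⟨c, rfl⟩ := hi
  rw [Nat.mul_lt_mul_left hd, Nat.mul_le_mul_left_iff hd]
  omega

lemma sum_range_alternating_telescope {R : Type*} [CommRing R] {p t : ℕ → R} {n : ℕ}
    (h0 : p 0 = t 0) (hsucc : ∀ r < n, p (r + 1) = t (r + 1) + t r) (hlast : p (n + 1) = t n) :
    ∑ r ∈ range (n + 2), (-1) ^ r * p r = 0 := by
  have partial_sum : ∀ k ≤ n, ∑ r ∈ range (k + 1), (-1) ^ r * p r = (-1) ^ k * t k := by
    intro k hk
    induction k with
    | zero => simp [h0]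
    | succ k ih =>
      rw [sum_range_succ, ih (by omega), hsucc k (by omega), pow_succ]
      ring
  rw [sum_range_succ, partial_sum n le_rfl, hlast, pow_succ]
  ring

theorem sum_neg_one_pow_mul_choose_mul_numDAlternating {R : Type*} [CommRing R] {d : ℕ}
    (hd : 0 < d) (n : ℕ) :
    ∑ r ∈ range (n + 2),
      (-1 : R) ^ r * ((d * (n + 1)).choose (d * r) * numDAlternating d (d * r) : ℕ) = 0 := by
  set m := d * (n + 1)
  have hp (r : ℕ) (hr : r ≤ n + 1) : m.choose (d * r) * numDAlternating d (d * r) =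
      Nat.card {σ : Perm (Fin m) // HasDescentSetExcept (fun i => d ∣ i ∧ i < d * r) (d * r) σ} :=
    (card_hasDescentSetExcept_eq_choose_mul (Nat.mul_le_mul_left d hr)).symm
  refine sum_range_alternating_telescope (t := fun r =>
    (Nat.card {σ : Perm (Fin m) // HasDescentSet (fun i => d ∣ i ∧ i ≤ d * r) σ} : R)) ?_ ?_ ?_
  · rw [hp 0 (Nat.zero_le _), Nat.card_congr (Equiv.subtypeEquivRight fun _ =>
      hasDescentSetExcept_iff_hasDescentSet (Or.inl (mul_zero d)))]
    exact congrArg _ (card_hasDescentSet_congr fun k _ _ => by simp only [mul_zero]; omega)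
  · intro r hr
    have hlt : d * (r + 1) < m := Nat.mul_lt_mul_of_pos_left (by omega) hd
    rw [hp (r + 1) (by omega), card_hasDescentSetExcept (Nat.mul_pos hd r.succ_pos) hlt,
      Nat.cast_add]
    congr 2 <;> refine card_hasDescentSet_congr fun k _ _ => ?_
    · exact ⟨by rintro (⟨hk, hlt⟩ | rfl); exacts [⟨hk, hlt.le⟩, ⟨dvd_mul_right _ _, le_rfl⟩],
        fun ⟨hk, hle⟩ => hle.lt_or_eq.imp_left (⟨hk, ·⟩)⟩
    · refine and_assoc.trans (and_congr_right fun hk => ?_)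
      rw [← lt_mul_add_one_iff_le_mul_of_dvd hd hk, Nat.succ_eq_add_one, Nat.mul_add_one]
      omega
  · rw [hp (n + 1) le_rfl, Nat.card_congr (Equiv.subtypeEquivRight fun _ =>
      hasDescentSetExcept_iff_hasDescentSet (Or.inr le_rfl))]
    exact congrArg _ (card_hasDescentSet_congr fun k _ _ =>
      and_congr_right (lt_mul_add_one_iff_le_mul_of_dvd hd))

open PowerSeries

lemma PowerSeries.expand_inv {K : Type*} [Field K] (p : ℕ) (hp : p ≠ 0) (φ : PowerSeries K)
    (h : constantCoeff φ ≠ 0) : (expand p hp φ)⁻¹ = expand p hp φ⁻¹ :=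
  (inv_eq_iff_mul_eq_one (by rwa [constantCoeff_expand])).2 (by
    rw [← map_mul, PowerSeries.inv_mul_cancel _ h, map_one])

lemma numDAlternating_zero (d : ℕ) : numDAlternating d 0 = 1 :=
  (Nat.card_congr (Equiv.subtypeUnivEquiv fun _ _ h => absurd h (Nat.not_lt_zero _))).trans
    Nat.card_unique

open Nat in
theorem inv_mk_one_div_factorial_mul {d : ℕ} (hd : 0 < d) :
    (mk fun k => (1 : ℚ) / (d * k)!)⁻¹ =
      mk fun k => (-1) ^ k * (numDAlternating d (d * k) : ℚ) / (d * k)! := by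
  refine (inv_eq_iff_mul_eq_one (by simp)).2 (ext fun n => ?_)
  rw [coeff_mul, coeff_one, Finset.Nat.sum_antidiagonal_eq_sum_range_succ_mk]
  rcases n with _ | n
  · simp [numDAlternating_zero]
  have hterm (r : ℕ) (hr : r ∈ range (n + 1 + 1)) :
      coeff r (mk fun k => (-1) ^ k * (numDAlternating d (d * k) : ℚ) / (d * k)!) *
        coeff (n + 1 - r) (mk fun k => (1 : ℚ) / (d * k)!) =
      (-1) ^ r * ((d * (n + 1)).choose (d * r) * numDAlternating d (d * r) : ℕ) /
        (d * (n + 1))! := by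
    have hle : d * r ≤ d * (n + 1) := Nat.mul_le_mul_left d (by simpa [Nat.lt_succ_iff] using hr)
    have hchoose : ((d * (n + 1)).choose (d * r) : ℚ) ≠ 0 := by
      exact_mod_cast (Nat.choose_pos hle).ne'
    rw [coeff_mk, coeff_mk, ← Nat.choose_mul_factorial_mul_factorial hle, ← Nat.mul_sub]
    push_cast
    field_simp
  rw [sum_congr rfl hterm, ← sum_div, sum_neg_one_pow_mul_choose_mul_numDAlternating hd,
    zero_div, if_neg n.succ_ne_zero]

theorem stmt_9 (d n : ℕ) (hd : 2 ≤ d) :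
    genEulerQ d (d * n) =
      (-1 : ℚ) ^ n *
        (Nat.card {σ : Equiv.Perm (Fin (d * n)) // IsDAlternating d σ} : ℚ) := by
  have hd0 : d ≠ 0 := by omega
  have hexpand : (mk fun m => if d ∣ m then (1 : ℚ) / m.factorial else 0) =
      expand d hd0 (mk fun k => (1 : ℚ) / (d * k).factorial) := by
    ext m
    rw [coeff_mk, coeff_expand, coeff_mk]
    split_ifs with hdm
    · rw [Nat.mul_div_cancel' hdm]
    · rfl
  rw [genEulerQ, hexpand, expand_inv _ _ _ (by simp), inv_mk_one_div_factorial_mul (by omega),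
    coeff_expand_mul, coeff_mk, numDAlternating]
  field_simp
end

section
/- For all integers d ≥ 2 and n ≥ 0, the generalized Euler number satisfies the congruence ℰ_{dn}^{(d)} ≡ 1 (mod 2). -/
/-! Write `F = ∑ x^{dk}/(dk)!`. Since `F` only involves the powers `x^{dk}`, so does `F⁻¹`, and
comparing coefficients of `x^N` in `F⁻¹ F = 1` for `d ∣ N ≠ 0` gives
`∑_{j ≤ N, d ∣ j} C(N, j) ℰ_j = 0`. This expresses `ℰ_N` as an integer combination of the earlier
`ℰ_j`, which are odd by induction, so modulo 2 it remains to see that `∑_{j ≤ N, d ∣ j} C(N, j)`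
is even: `j ↦ N - j` pairs off equal binomial coefficients, and a fixed point contributes the even
central binomial coefficient `C(2j, j)`. -/

open PowerSeries Finset
open scoped Nat

theorem PowerSeries.coeff_inv_eq_zero_of_not_dvd {K : Type*} [Field K] {d : ℕ} {f : K⟦X⟧}
    (hf : ∀ m, ¬d ∣ m → coeff m f = 0) {n : ℕ} (hn : ¬d ∣ n) : coeff n f⁻¹ = 0 := by
  induction n using Nat.strong_induction_on with
  | _ n ih =>
  have hn0 : n ≠ 0 := by rintro rfl; exact hn (dvd_zero d)
  rw [coeff_inv, if_neg hn0]
  refine mul_eq_zero_of_right _ (sum_eq_zero fun p hp => ?_)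
  rw [HasAntidiagonal.mem_antidiagonal] at hp
  split_ifs with hlt
  · by_cases h1 : d ∣ p.1
    · rw [ih p.2 hlt fun h2 => hn (hp ▸ dvd_add h1 h2), mul_zero]
    · rw [hf _ h1, zero_mul]
  · rfl

theorem sum_choose_cast_zmod_two_eq_zero_of_symm {N : ℕ} (hN : N ≠ 0) {s : Finset ℕ}
    (hs : ∀ j ∈ s, j ≤ N ∧ N - j ∈ s) : ∑ j ∈ s, (N.choose j : ZMod 2) = 0 := by
  refine sum_involution (fun j _ => N - j) (fun j hj => ?_) (fun j hj hne hfix => hne ?_)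
    (fun j hj => (hs j hj).2) (fun j hj => Nat.sub_sub_self (hs j hj).1)
  · rw [← Nat.choose_symm (hs j hj).1, CharTwo.add_self_eq_zero]
  · have hN2 : N = 2 * j := by have := (hs j hj).1; omega
    rw [ZMod.natCast_eq_zero_iff, hN2, ← Nat.centralBinom_eq_two_mul_choose]
    exact Nat.two_dvd_centralBinom_of_one_le (by omega)

noncomputable def expDvdSeries (d : ℕ) : ℚ⟦X⟧ :=
  mk fun m => if d ∣ m then 1 / (m ! : ℚ) else 0

theorem coeff_expDvdSeries (d m : ℕ) :
    coeff m (expDvdSeries d) = if d ∣ m then 1 / (m ! : ℚ) else 0 :=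
  coeff_mk _ _

theorem constantCoeff_expDvdSeries (d : ℕ) : constantCoeff (expDvdSeries d) = 1 := by
  simp [← coeff_zero_eq_constantCoeff_apply, coeff_expDvdSeries]

theorem coeff_inv_expDvdSeries_of_not_dvd {d n : ℕ} (hn : ¬d ∣ n) :
    coeff n (expDvdSeries d)⁻¹ = 0 :=
  coeff_inv_eq_zero_of_not_dvd (fun m hm => by rw [coeff_expDvdSeries, if_neg hm]) hn

theorem genEulerQ_eq (d n : ℕ) : genEulerQ d n = n ! * coeff n (expDvdSeries d)⁻¹ := rfl

theorem genEulerQ_zero (d : ℕ) : genEulerQ d 0 = 1 := by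
  simp [genEulerQ_eq, constantCoeff_expDvdSeries]

theorem sum_choose_mul_genEulerQ {d N : ℕ} (hdN : d ∣ N) (hN : N ≠ 0) :
    ∑ j ∈ range (N + 1) with d ∣ j, (N.choose j : ℚ) * genEulerQ d j = 0 := by
  have hprod : coeff N ((expDvdSeries d)⁻¹ * expDvdSeries d) = 0 := by
    rw [PowerSeries.inv_mul_cancel _ (by simp [constantCoeff_expDvdSeries]), coeff_one, if_neg hN]
  rw [coeff_mul, Nat.sum_antidiagonal_eq_sum_range_succ_mk] at hprod
  have hterm : ∀ j ∈ range (N + 1), (if d ∣ j then (N.choose j : ℚ) * genEulerQ d j else 0) =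
      N ! * (coeff j (expDvdSeries d)⁻¹ * coeff (N - j) (expDvdSeries d)) := by
    intro j hj
    have hjN : j ≤ N := Nat.lt_succ_iff.mp (mem_range.mp hj)
    split_ifs with hdj
    · rw [coeff_expDvdSeries, if_pos (Nat.dvd_sub hdN hdj), genEulerQ_eq,
        ← Nat.choose_mul_factorial_mul_factorial hjN]
      push_cast
      field_simp
    · rw [coeff_inv_expDvdSeries_of_not_dvd hdj, zero_mul, mul_zero]
  rw [sum_filter, sum_congr rfl hterm, ← mul_sum, hprod, mul_zero]

theorem filter_dvd_range_add_one {d N : ℕ} (hdN : d ∣ N) :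
    {j ∈ range (N + 1) | d ∣ j} = insert N {j ∈ range N | d ∣ j} := by
  rw [range_add_one, filter_insert, if_pos hdN]

theorem exists_int_genEulerQ_eq_and_modEq_one {d N : ℕ} (hdN : d ∣ N) :
    ∃ z : ℤ, genEulerQ d N = z ∧ z ≡ 1 [ZMOD 2] := by
  induction N using Nat.strong_induction_on with
  | _ N ih =>
  rcases eq_or_ne N 0 with rfl | hN
  · exact ⟨1, by rw [genEulerQ_zero, Int.cast_one], rfl⟩
  choose! z hz hodd using ih
  have hN_notMem : N ∉ {j ∈ range N | d ∣ j} := by simp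
  refine ⟨-∑ j ∈ range N with d ∣ j, N.choose j * z j, ?_, ?_⟩
  · have hrec := sum_choose_mul_genEulerQ hdN hN
    rw [filter_dvd_range_add_one hdN, sum_insert hN_notMem, Nat.choose_self, Nat.cast_one,
      one_mul] at hrec
    have hsum : ∑ j ∈ range N with d ∣ j, (N.choose j : ℚ) * genEulerQ d j =
        ∑ j ∈ range N with d ∣ j, (N.choose j : ℚ) * z j :=
      sum_congr rfl fun j hj => by
        rw [mem_filter, mem_range] at hj
        rw [hz j hj.1 hj.2]
    push_cast
    linarith
  · have hpar := sum_choose_cast_zmod_two_eq_zero_of_symm hN (s := {j ∈ range (N + 1) | d ∣ j})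
      fun j hj => by
        simp only [mem_filter, mem_range] at hj ⊢
        exact ⟨by omega, by omega, Nat.dvd_sub hdN hj.2⟩
    rw [filter_dvd_range_add_one hdN, sum_insert hN_notMem, Nat.choose_self, Nat.cast_one] at hpar
    have hterm : ∀ j ∈ {j ∈ range N | d ∣ j},
        (N.choose j : ZMod 2) * (z j : ZMod 2) = N.choose j :=
      fun j hj => by
        rw [mem_filter, mem_range] at hj
        rw [(ZMod.intCast_eq_intCast_iff _ _ 2).mpr (hodd j hj.1 hj.2), Int.cast_one, mul_one]
    refine (ZMod.intCast_eq_intCast_iff _ _ 2).mp ?_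
    push_cast
    rw [sum_congr rfl hterm]
    linear_combination -hpar

theorem stmt_10_general (d n : ℕ) :
    ∃ z : ℤ, genEulerQ d (d * n) = (z : ℚ) ∧ z ≡ 1 [ZMOD 2] :=
  exists_int_genEulerQ_eq_and_modEq_one (dvd_mul_right d n)

theorem stmt_10 (d n : ℕ) (hd : 2 ≤ d) :
    ∃ z : ℤ, genEulerQ d (d * n) = (z : ℚ) ∧ z ≡ 1 [ZMOD 2] :=
  stmt_10_general d n
end
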